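/- Let G be a finite nilpotent group of class at most 2 (i.e., G' ⊆ Z(G)) that can be generated by 2 elements. Then every IA-automorphism of G is an inner automorphism, i.e., IA(G) = Inn(G). -/

import Mathlib

/-!
In a group of class at most 2 the commutator map is bimultiplicative, so if `a, b` generate `G`
then `G'` is the cyclic group generated by `c = ⁅a, b⁆`. An IA-automorphism `α` therefore moves
the generators by central elements, `α a = a c^m` and `α b = b c^n`, and bimultiplicativity gives
`⁅b^(-m) a^n, a⁆ = c^m` and `⁅b^(-m) a^n, b⁆ = c^n`; so conjugation by `b^(-m) a^n` agrees with `α`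
on the generators, hence everywhere.
-/

open scoped commutatorElement

/-- The group of IA-automorphisms of `G`: automorphisms inducing the identity on the
abelianization `G/G'`. -/
def IA (G : Type*) [Group G] : Subgroup (MulAut G) where
  carrier := {α | ∀ g : G, g⁻¹ * α g ∈ commutator G}
  one_mem' := by intro g; simp
  mul_mem' := by
    intro α β hα hβ g
    have h : g⁻¹ * (α * β) g = (g⁻¹ * β g) * ((β g)⁻¹ * α (β g)) := by
      simp [MulAut.mul_apply, mul_assoc]
    rw [Set.mem_setOf_eq] at *
    rw [h]
    exact mul_mem (hβ g) (hα (β g))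
  inv_mem' := by
    intro α hα g
    have h := hα (α⁻¹ g)
    rw [MulAut.apply_inv_self] at h
    simpa using inv_mem h

/-- The group of inner automorphisms of `G`. -/
def Inn (G : Type*) [Group G] : Subgroup (MulAut G) :=
  (MulAut.conj : G →* MulAut G).range

theorem commutatorElement_mem_commutator {G : Type*} [Group G] (x y : G) :
    ⁅x, y⁆ ∈ commutator G :=
  commutator_eq_closure G ▸ Subgroup.subset_closure (commutator_mem_commutatorSet x y)

theorem Inn_le_IA {G : Type*} [Group G] : Inn G ≤ IA G := by
  rintro _ ⟨x, rfl⟩ g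
  have h : g⁻¹ * MulAut.conj x g = ⁅g⁻¹, x⁆ := by
    rw [MulAut.conj_apply]
    group
  exact h ▸ commutatorElement_mem_commutator g⁻¹ x

section ClassTwo

variable {G : Type*} [Group G] (h2 : commutator G ≤ Subgroup.center G)
include h2

theorem commutatorElement_mem_center_of_le_center (x y : G) : ⁅x, y⁆ ∈ Subgroup.center G :=
  h2 (commutatorElement_mem_commutator x y)

theorem commutatorElement_mul_left_of_le_center (x y z : G) :
    ⁅x * y, z⁆ = ⁅x, z⁆ * ⁅y, z⁆ := by
  have hyz := Subgroup.mem_center_iff.mp (commutatorElement_mem_center_of_le_center h2 y z)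
  calc ⁅x * y, z⁆ = x * ⁅y, z⁆ * x⁻¹ * ⁅x, z⁆ := by group
    _ = ⁅x, z⁆ * ⁅y, z⁆ := by rw [hyz x, mul_inv_cancel_right, hyz]

theorem commutatorElement_mul_right_of_le_center (x y z : G) :
    ⁅x, y * z⁆ = ⁅x, y⁆ * ⁅x, z⁆ := by
  have hxz := Subgroup.mem_center_iff.mp (commutatorElement_mem_center_of_le_center h2 x z)
  rw [← commutatorElement_inv, commutatorElement_mul_left_of_le_center h2, mul_inv_rev,
    commutatorElement_inv, commutatorElement_inv, hxz]

def commutatorLeftHom (z : G) : G →* G where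
  toFun x := ⁅x, z⁆
  map_one' := commutatorElement_one_left z
  map_mul' x y := commutatorElement_mul_left_of_le_center h2 x y z

def commutatorRightHom (x : G) : G →* G where
  toFun y := ⁅x, y⁆
  map_one' := commutatorElement_one_right x
  map_mul' y z := commutatorElement_mul_right_of_le_center h2 x y z

theorem commutatorElement_zpow_left_of_le_center (x y : G) (k : ℤ) :
    ⁅x ^ k, y⁆ = ⁅x, y⁆ ^ k :=
  map_zpow (commutatorLeftHom h2 y) x k

theorem commutator_le_zpowers_of_closure_pair_eq_top {a b : G}
    (hab : Subgroup.closure {a, b} = ⊤) :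
    commutator G ≤ Subgroup.zpowers ⁅a, b⁆ := by
  have generators : ∀ t ∈ ({a, b} : Set G), ∀ s ∈ ({a, b} : Set G),
      ⁅t, s⁆ ∈ Subgroup.zpowers ⁅a, b⁆ := by
    rintro _ (rfl | rfl) _ (rfl | rfl)
    · rw [commutatorElement_self]; exact one_mem _
    · exact Subgroup.mem_zpowers _
    · rw [← inv_mem_iff, commutatorElement_inv]; exact Subgroup.mem_zpowers _
    · rw [commutatorElement_self]; exact one_mem _
  have left_generator : ∀ t ∈ ({a, b} : Set G), ∀ y : G, ⁅t, y⁆ ∈ Subgroup.zpowers ⁅a, b⁆ :=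
    fun t ht y => (Subgroup.closure_le
      ((Subgroup.zpowers ⁅a, b⁆).comap (commutatorRightHom h2 t))).mpr
      (generators t ht) (hab ▸ Subgroup.mem_top y)
  rw [commutator_eq_closure, Subgroup.closure_le]
  rintro _ ⟨x, y, rfl⟩
  exact (Subgroup.closure_le ((Subgroup.zpowers ⁅a, b⁆).comap (commutatorLeftHom h2 y))).mpr
    (fun t ht => left_generator t ht y) (hab ▸ Subgroup.mem_top x)

theorem conj_eq_of_commutatorElement_eq_of_le_center {x s t : G} (h : ⁅x, s⁆ = s⁻¹ * t) :
    x * s * x⁻¹ = t := by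
  have hxs := Subgroup.mem_center_iff.mp (commutatorElement_mem_center_of_le_center h2 x s)
  calc x * s * x⁻¹ = ⁅x, s⁆ * s := by group
    _ = s * (s⁻¹ * t) := by rw [← hxs, h]
    _ = t := mul_inv_cancel_left s t

theorem conj_eq_of_closure_pair_eq_top {a b : G} (hab : Subgroup.closure {a, b} = ⊤)
    (α : MulAut G) {m n : ℤ} (hm : ⁅a, b⁆ ^ m = a⁻¹ * α a) (hn : ⁅a, b⁆ ^ n = b⁻¹ * α b) :
    MulAut.conj (b ^ (-m) * a ^ n) = α := by
  have hba : ⁅b, a⁆ ^ (-m) = ⁅a, b⁆ ^ m := by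
    rw [← commutatorElement_inv, inv_zpow', neg_neg]
  apply MulEquiv.toMonoidHom_injective
  refine MonoidHom.eq_of_eqOn_dense hab ?_
  rintro s (rfl | rfl) <;>
  · refine conj_eq_of_commutatorElement_eq_of_le_center h2 ?_
    simp only [commutatorElement_mul_left_of_le_center h2,
      commutatorElement_zpow_left_of_le_center h2, commutatorElement_self, one_zpow, one_mul,
      mul_one, hba, hm, hn, MulEquiv.coe_toMonoidHom]

end ClassTwo

theorem IA_eq_Inn_of_two_generated (G : Type*) [Group G]
    (h2 : commutator G ≤ Subgroup.center G)
    (hgen : ∃ a b : G, Subgroup.closure {a, b} = ⊤) :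
    IA G = Inn G := by
  obtain ⟨a, b, hab⟩ := hgen
  refine le_antisymm (fun α hα => ?_) Inn_le_IA
  have hG' := commutator_le_zpowers_of_closure_pair_eq_top h2 hab
  obtain ⟨m, hm⟩ := Subgroup.mem_zpowers_iff.mp (hG' (hα a))
  obtain ⟨n, hn⟩ := Subgroup.mem_zpowers_iff.mp (hG' (hα b))
  exact ⟨b ^ (-m) * a ^ n, conj_eq_of_closure_pair_eq_top h2 hab α hm hn⟩
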